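/- arXiv:2510.12312 — 2 statements merged into one kernel-verified Lean document; each statement's English description precedes it below -/
import Mathlib

section
/- Let M = ⟨S, A, P, R, γ⟩ be a finite MDP with 1/2 < γ < 1, M̄ = ⟨S̄, A, P̄, R̄, γ⟩ a latent MDP over a finite metric space (S̄, d̄), φ : S → S̄ an encoder, π̄ a latent policy, π_b a baseline policy, C ∈ (1, 1/γ) with π̄∘φ ∈ N^C(π_b), and D = max{π̄(a|φ(s))/π_b(a|s) : s ∈ S, a ∈ supp π_b(·|s)}. Let ξ be a stationary distribution of π_b. Assume the latent model has Lipschitz constants K_R̄, K_P̄ under π̄ with K_P̄ < 1/γ, and set K_V = K_R̄/(1 − γ·K_P̄). Let ε > 0 and δ = 4·(L_R + γ·K_V·L_P)/(ε·(1/D − γ)), where L_R, L_P are the reward and transition losses with respect to ξ and π_b. Then for every coupling λ ∈ Δ(S × S) whose two marginals are both equal to ξ, λ({(s₁, s₂) : |V^{π̄∘φ}(s₁) − V^{π̄∘φ}(s₂)| > K_V·d̄(φ(s₁), φ(s₂)) + ε}) ≤ δ; i.e., with probability at least 1 − δ, |V^{π̄∘φ}(s₁) − V^{π̄∘φ}(s₂)|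 ≤ K_V·d̄(φ(s₁), φ(s₂)) + ε. -/
open Finset

/-!
The latent value function `V̄` is the fixed point of the latent Bellman operator. That operator
maps `K_V`-Lipschitz functions to `K_V`-Lipschitz functions (Kantorovich duality plus
`K_V = K_R̄ + γ K_P̄ K_V`), and this set is closed, so `V̄` is `K_V`-Lipschitz. The discrepancy
`g s = |V s - V̄ (φ s)|` is then bounded by one Bellman step: the reward error, `K_V` times the
transition error, and `γ` times the expected next discrepancy. Averaging over the stationary
distribution `ξ` and using `π̄ ∘ φ ≤ D π_b` gives `E_ξ g ≤ D (L_R + γ K_V L_P + γ E_ξ g)`,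
i.e. `E_ξ g · (1/D - γ) ≤ L_R + γ K_V L_P`. On the bad event `g s₁ + g s₂ > ε`, so Markov's
inequality under the coupling bounds its mass by `2 E_ξ g / ε ≤ δ`.
-/

variable {S A SL : Type*} [Fintype S] [Fintype A] [Fintype SL]

/-- A (stationary, stochastic) policy. -/
def IsPolicy {X : Type*} [Fintype X] (π : X → A → ℝ) : Prop :=
  ∀ x, (∀ a, 0 ≤ π x a) ∧ (∑ a, π x a) = 1

/-- The neighborhood `N^C(π)`. -/
def InNbhd (C : ℝ) (π π' : S → A → ℝ) : Prop :=
  IsPolicy π' ∧ (∀ s a, (0 < π s a ↔ 0 < π' s a)) ∧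
    ∀ s a, 0 < π s a → (2 - C ≤ π' s a / π s a ∧ π' s a / π s a ≤ C)

/-- The Wasserstein distance between two distributions on a finite metric
space (infimum of the expected distance over all couplings). -/
noncomputable def Wass [MetricSpace SL] (μ ν : SL → ℝ) : ℝ :=
  sInf { c : ℝ | ∃ lam : SL × SL → ℝ, (∀ p, 0 ≤ lam p) ∧
    (∀ x, (∑ y, lam (x, y)) = μ x) ∧ (∀ y, (∑ x, lam (x, y)) = ν y) ∧
    c = ∑ p : SL × SL, lam p * dist p.1 p.2 }

lemma wass_nonneg {X : Type*} [Fintype X] [MetricSpace X] (μ ν : X → ℝ) : 0 ≤ Wass μ ν := by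
  apply Real.sInf_nonneg
  rintro c ⟨lam, hlam, -, -, rfl⟩
  exact sum_nonneg fun p _ => mul_nonneg (hlam p) dist_nonneg

lemma abs_sum_mul_le_of_mem_stdSimplex {X : Type*} [Fintype X] {μ : X → ℝ}
    (hμ : μ ∈ stdSimplex ℝ X) {f : X → ℝ} {c : ℝ} (hf : ∀ x, |f x| ≤ c) :
    |∑ x, μ x * f x| ≤ c :=
  calc |∑ x, μ x * f x| ≤ ∑ x, μ x * c := by
        refine (abs_sum_le_sum_abs _ _).trans (sum_le_sum fun x _ => ?_)
        rw [abs_mul, abs_of_nonneg (hμ.1 x)]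
        exact mul_le_mul_of_nonneg_left (hf x) (hμ.1 x)
    _ = c := by rw [← sum_mul, hμ.2, one_mul]

/-- The easy half of Kantorovich–Rubinstein duality. -/
lemma abs_sum_mul_sub_sum_mul_le_mul_wass {X : Type*} [Fintype X] [MetricSpace X]
    {μ ν : X → ℝ} (hμ : μ ∈ stdSimplex ℝ X) (hν : ν ∈ stdSimplex ℝ X) {f : X → ℝ} {L : ℝ}
    (hL : 0 ≤ L) (hf : ∀ x y, |f x - f y| ≤ L * dist x y) :
    |∑ x, μ x * f x - ∑ x, ν x * f x| ≤ L * Wass μ ν := by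
  have hcoupling : ∀ lam : X × X → ℝ, (∀ p, 0 ≤ lam p) →
      (∀ x, ∑ y, lam (x, y) = μ x) → (∀ y, ∑ x, lam (x, y) = ν y) →
      |∑ x, μ x * f x - ∑ x, ν x * f x| ≤ L * ∑ p : X × X, lam p * dist p.1 p.2 := by
    intro lam hlam hfst hsnd
    have hμf : ∑ x, μ x * f x = ∑ p : X × X, lam p * f p.1 := by
      simp only [← hfst, sum_mul, Fintype.sum_prod_type]
    have hνf : ∑ x, ν x * f x = ∑ p : X × X, lam p * f p.2 := by
      simp only [← hsnd, sum_mul, Fintype.sum_prod_type_right]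
    rw [hμf, hνf, ← sum_sub_distrib, mul_sum]
    refine (abs_sum_le_sum_abs _ _).trans (sum_le_sum fun p _ => ?_)
    rw [← mul_sub, abs_mul, abs_of_nonneg (hlam p), mul_left_comm]
    exact mul_le_mul_of_nonneg_left (hf _ _) (hlam p)
  obtain ⟨lam₀, hlam₀, hfst₀, hsnd₀⟩ : ∃ lam : X × X → ℝ, (∀ p, 0 ≤ lam p) ∧
      (∀ x, ∑ y, lam (x, y) = μ x) ∧ (∀ y, ∑ x, lam (x, y) = ν y) :=
    ⟨fun p => μ p.1 * ν p.2, fun p => mul_nonneg (hμ.1 _) (hν.1 _),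
      fun x => by simp only [← mul_sum, hν.2, mul_one],
      fun y => by simp only [← sum_mul, hμ.2, one_mul]⟩
  rw [Wass, ← smul_eq_mul, ← Real.sInf_smul_of_nonneg hL]
  refine le_csInf ⟨_, Set.smul_mem_smul_set ⟨lam₀, hlam₀, hfst₀, hsnd₀, rfl⟩⟩ ?_
  rintro _ ⟨_, ⟨lam, hlam, hfst, hsnd, rfl⟩, rfl⟩
  exact hcoupling lam hlam hfst hsnd

section Bellman

variable {X : Type*} [Fintype X] (π R : X → A → ℝ) (P : X → A → X → ℝ) (γ : ℝ)

def policyReward (x : X) : ℝ := ∑ a, π x a * R x a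

def policyKernel (x x' : X) : ℝ := ∑ a, π x a * P x a x'

def bellman (f : X → ℝ) (x : X) : ℝ := ∑ a, π x a * (R x a + γ * ∑ x', P x a x' * f x')

variable {π P}

lemma policyKernel_mem_stdSimplex (hπ : IsPolicy π) (hP : ∀ x a, P x a ∈ stdSimplex ℝ X)
    (x : X) : policyKernel π P x ∈ stdSimplex ℝ X := by
  refine ⟨fun x' => sum_nonneg fun a _ => mul_nonneg ((hπ x).1 a) ((hP x a).1 x'), ?_⟩
  simp only [policyKernel]
  rw [sum_comm]
  simp only [← mul_sum, (hP x _).2, mul_one, (hπ x).2]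

variable (π P)

lemma bellman_eq (f : X → ℝ) (x : X) :
    bellman π R P γ f x = policyReward π R x + γ * ∑ x', policyKernel π P x x' * f x' := by
  simp only [bellman, policyReward, policyKernel, mul_add, sum_add_distrib, mul_sum, sum_mul]
  rw [sum_comm (γ := X)]
  congr 1
  refine sum_congr rfl fun x' _ => sum_congr rfl fun a _ => by ring

lemma bellman_sub_bellman (f g : X → ℝ) (x : X) :
    bellman π R P γ f x - bellman π R P γ g x
      = γ * ∑ x', policyKernel π P x x' * (f x' - g x') := by
  simp only [bellman_eq, mul_sub, sum_sub_distrib]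
  ring

variable {π R P γ}

lemma contractingWith_bellman (hπ : IsPolicy π) (hP : ∀ x a, P x a ∈ stdSimplex ℝ X)
    (hγ0 : 0 ≤ γ) (hγ1 : γ < 1) : ContractingWith ⟨γ, hγ0⟩ (bellman π R P γ) := by
  refine ⟨by exact_mod_cast hγ1, LipschitzWith.of_dist_le_mul fun f g => ?_⟩
  refine (dist_pi_le_iff (by positivity)).2 fun x => ?_
  rw [Real.dist_eq, bellman_sub_bellman, abs_mul, abs_of_nonneg hγ0]
  refine mul_le_mul_of_nonneg_left ?_ hγ0
  exact abs_sum_mul_le_of_mem_stdSimplex (policyKernel_mem_stdSimplex hπ hP x)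
    fun x' => (Real.dist_eq _ _).symm.trans_le (dist_le_pi_dist f g x')

variable [MetricSpace X] {KR KP KV : ℝ}

lemma bellman_lipschitz (hπ : IsPolicy π) (hP : ∀ x a, P x a ∈ stdSimplex ℝ X) (hγ0 : 0 ≤ γ)
    (hLipR : ∀ x y, |policyReward π R x - policyReward π R y| ≤ KR * dist x y)
    (hLipP : ∀ x y, Wass (policyKernel π P x) (policyKernel π P y) ≤ KP * dist x y)
    (hKV0 : 0 ≤ KV) (hKV : KR + γ * KP * KV ≤ KV)
    {f : X → ℝ} (hf : ∀ x y, |f x - f y| ≤ KV * dist x y) (x y : X) :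
    |bellman π R P γ f x - bellman π R P γ f y| ≤ KV * dist x y := by
  have hkernel := abs_sum_mul_sub_sum_mul_le_mul_wass (policyKernel_mem_stdSimplex hπ hP x)
    (policyKernel_mem_stdSimplex hπ hP y) hKV0 hf
  calc |bellman π R P γ f x - bellman π R P γ f y|
      = |(policyReward π R x - policyReward π R y) + γ * (∑ x', policyKernel π P x x' * f x'
          - ∑ x', policyKernel π P y x' * f x')| := by rw [bellman_eq, bellman_eq]; ring_nf
    _ ≤ KR * dist x y + γ * (KV * (KP * dist x y)) := by
        refine (abs_add_le _ _).trans (add_le_add (hLipR x y) ?_)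
        rw [abs_mul, abs_of_nonneg hγ0]
        exact mul_le_mul_of_nonneg_left
          (hkernel.trans (mul_le_mul_of_nonneg_left (hLipP x y) hKV0)) hγ0
    _ = (KR + γ * KP * KV) * dist x y := by ring
    _ ≤ KV * dist x y := mul_le_mul_of_nonneg_right hKV dist_nonneg

lemma exists_bellman_fixedPoint_lipschitz (hπ : IsPolicy π)
    (hP : ∀ x a, P x a ∈ stdSimplex ℝ X) (hγ0 : 0 ≤ γ) (hγ1 : γ < 1) (hKR0 : 0 ≤ KR)
    (hγKP : γ * KP < 1)
    (hLipR : ∀ x y, |policyReward π R x - policyReward π R y| ≤ KR * dist x y)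
    (hLipP : ∀ x y, Wass (policyKernel π P x) (policyKernel π P y) ≤ KP * dist x y) :
    ∃ V : X → ℝ, (∀ x, V x = bellman π R P γ V x) ∧
      ∀ x y, |V x - V y| ≤ KR / (1 - γ * KP) * dist x y := by
  set KV := KR / (1 - γ * KP)
  have hden : 0 < 1 - γ * KP := by linarith
  have hKV0 : 0 ≤ KV := div_nonneg hKR0 hden.le
  have hKV : KR + γ * KP * KV ≤ KV := by
    have : KV * (1 - γ * KP) = KR := div_mul_cancel₀ _ hden.ne'
    linarith
  set Lip := {f : X → ℝ | ∀ x y, |f x - f y| ≤ KV * dist x y}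
  have hLip : IsClosed Lip := by
    simp only [Lip, Set.ofPred_forall]
    exact isClosed_iInter fun x => isClosed_iInter fun y => isClosed_le
      ((continuous_apply x).sub (continuous_apply y)).abs continuous_const
  have hmaps : Set.MapsTo (bellman π R P γ) Lip Lip :=
    fun f hf => bellman_lipschitz hπ hP hγ0 hLipR hLipP hKV0 hKV hf
  have hzero : (0 : X → ℝ) ∈ Lip := fun x y => by
    simpa using mul_nonneg hKV0 dist_nonneg
  have hT := contractingWith_bellman (R := R) hπ hP hγ0 hγ1
  refine ⟨hT.fixedPoint, fun x => congrFun hT.fixedPoint_isFixedPt.symm x, ?_⟩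
  exact hLip.mem_of_tendsto (hT.tendsto_iterate_fixedPoint 0)
    (Filter.Eventually.of_forall fun n => hmaps.iterate n hzero)

end Bellman

section Pushforward

variable [DecidableEq SL] (φ : S → SL)

def pushforward (p : S → ℝ) (x : SL) : ℝ := ∑ s, if φ s = x then p s else 0

lemma sum_pushforward_mul (p : S → ℝ) (f : SL → ℝ) :
    ∑ x, pushforward φ p x * f x = ∑ s, p s * f (φ s) := by
  simp only [pushforward, sum_mul, ite_mul, zero_mul]
  rw [sum_comm]
  simp

variable {φ}

lemma pushforward_mem_stdSimplex {p : S → ℝ} (hp : p ∈ stdSimplex ℝ S) :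
    pushforward φ p ∈ stdSimplex ℝ SL := by
  refine ⟨fun x => sum_nonneg fun s _ => ?_, ?_⟩
  · split_ifs
    exacts [hp.1 s, le_rfl]
  · simpa [hp.2] using sum_pushforward_mul φ p 1

end Pushforward

lemma abs_value_sub_latent_value_le [MetricSpace SL] [DecidableEq SL] {P : S → A → S → ℝ}
    {R : S → A → ℝ} {Pbar : SL → A → SL → ℝ} {Rbar : SL → A → ℝ} {φ : S → SL}
    {πbar : SL → A → ℝ} {γ KV : ℝ} {V : S → ℝ} {Vb : SL → ℝ}
    (hP : ∀ s a, P s a ∈ stdSimplex ℝ S) (hPbar : ∀ x a, Pbar x a ∈ stdSimplex ℝ SL)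
    (hπbar : IsPolicy πbar) (hγ0 : 0 ≤ γ) (hKV0 : 0 ≤ KV)
    (hV : ∀ s, V s = bellman (fun s a => πbar (φ s) a) R P γ V s)
    (hVb : ∀ x, Vb x = bellman πbar Rbar Pbar γ Vb x)
    (hVbLip : ∀ x y, |Vb x - Vb y| ≤ KV * dist x y) (s : S) :
    |V s - Vb (φ s)| ≤ ∑ a, πbar (φ s) a *
      ((|R s a - Rbar (φ s) a| + γ * KV * Wass (pushforward φ (P s a)) (Pbar (φ s) a))
        + γ * ∑ s', P s a s' * |V s' - Vb (φ s')|) := by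
  have hstep : ∀ a, |R s a - Rbar (φ s) a + γ * (∑ s', P s a s' * V s'
      - ∑ x', Pbar (φ s) a x' * Vb x')| ≤ |R s a - Rbar (φ s) a|
        + γ * KV * Wass (pushforward φ (P s a)) (Pbar (φ s) a)
        + γ * ∑ s', P s a s' * |V s' - Vb (φ s')| := by
    intro a
    have htransition := abs_sum_mul_sub_sum_mul_le_mul_wass
      (pushforward_mem_stdSimplex (φ := φ) (hP s a)) (hPbar (φ s) a) hKV0 hVbLip
    rw [sum_pushforward_mul] at htransition
    have hnext : |∑ s', P s a s' * (V s' - Vb (φ s'))| ≤ ∑ s', P s a s' * |V s' - Vb (φ s')| :=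
      (abs_sum_le_sum_abs _ _).trans_eq <| sum_congr rfl fun s' _ => by
        rw [abs_mul, abs_of_nonneg ((hP s a).1 s')]
    have hsplit : ∑ s', P s a s' * V s' - ∑ x', Pbar (φ s) a x' * Vb x'
        = ∑ s', P s a s' * (V s' - Vb (φ s'))
          + (∑ s', P s a s' * Vb (φ s') - ∑ x', Pbar (φ s) a x' * Vb x') := by
      simp only [mul_sub, sum_sub_distrib]
      ring
    rw [hsplit]
    refine (abs_add_le _ _).trans ?_
    rw [abs_mul, abs_of_nonneg hγ0]
    nlinarith [abs_add_le (∑ s', P s a s' * (V s' - Vb (φ s')))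
      (∑ s', P s a s' * Vb (φ s') - ∑ x', Pbar (φ s) a x' * Vb x')]
  calc |V s - Vb (φ s)|
      = |∑ a, πbar (φ s) a * (R s a - Rbar (φ s) a + γ * (∑ s', P s a s' * V s'
          - ∑ x', Pbar (φ s) a x' * Vb x'))| := by
        rw [hV, hVb, bellman, bellman, ← sum_sub_distrib]
        congr 1
        exact sum_congr rfl fun a _ => by ring
    _ ≤ _ := by
        refine (abs_sum_le_sum_abs _ _).trans (sum_le_sum fun a _ => ?_)
        rw [abs_mul, abs_of_nonneg ((hπbar (φ s)).1 a)]
        exact mul_le_mul_of_nonneg_left (hstep a) ((hπbar (φ s)).1 a)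

section Stationary

variable {P : S → A → S → ℝ} {πb : S → A → ℝ} {ξ : S → ℝ}

lemma sum_stationary_mul_sum_kernel
    (hstat : ∀ s', ∑ s, ∑ a, ξ s * πb s a * P s a s' = ξ s') (g : S → ℝ) :
    ∑ s, ∑ a, ξ s * πb s a * ∑ s', P s a s' * g s' = ∑ s, ξ s * g s := by
  calc ∑ s, ∑ a, ξ s * πb s a * ∑ s', P s a s' * g s'
      = ∑ s, ∑ s', ∑ a, ξ s * πb s a * P s a s' * g s' := by
        simp only [mul_sum, ← mul_assoc]
        exact sum_congr rfl fun s _ => sum_comm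
    _ = ∑ s', (∑ s, ∑ a, ξ s * πb s a * P s a s') * g s' := by
        rw [sum_comm]
        simp only [sum_mul]
    _ = ∑ s, ξ s * g s := by simp only [hstat]

lemma sum_stationary_mul_le (hξ0 : ∀ s, 0 ≤ ξ s)
    (hstat : ∀ s', ∑ s, ∑ a, ξ s * πb s a * P s a s' = ξ s') (hP0 : ∀ s a s', 0 ≤ P s a s')
    {π : S → A → ℝ} {D γ : ℝ} (hπ : ∀ s a, π s a ≤ D * πb s a) (hγ0 : 0 ≤ γ)
    {c : S → A → ℝ} {g : S → ℝ} (hc0 : ∀ s a, 0 ≤ c s a) (hg0 : ∀ s, 0 ≤ g s)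
    (hg : ∀ s, g s ≤ ∑ a, π s a * (c s a + γ * ∑ s', P s a s' * g s')) :
    ∑ s, ξ s * g s ≤ D * (∑ s, ∑ a, ξ s * πb s a * c s a + γ * ∑ s, ξ s * g s) := by
  have hX0 : ∀ s a, 0 ≤ c s a + γ * ∑ s', P s a s' * g s' := fun s a =>
    add_nonneg (hc0 s a) <|
      mul_nonneg hγ0 (sum_nonneg fun s' _ => mul_nonneg (hP0 s a s') (hg0 s'))
  calc ∑ s, ξ s * g s
      ≤ ∑ s, ∑ a, ξ s * π s a * (c s a + γ * ∑ s', P s a s' * g s') := by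
        refine sum_le_sum fun s _ => ?_
        simp only [mul_assoc, ← mul_sum]
        exact mul_le_mul_of_nonneg_left (hg s) (hξ0 s)
    _ ≤ ∑ s, ∑ a, D * (ξ s * πb s a * (c s a + γ * ∑ s', P s a s' * g s')) := by
        refine sum_le_sum fun s _ => sum_le_sum fun a _ => ?_
        linear_combination
          mul_le_mul_of_nonneg_right (mul_le_mul_of_nonneg_left (hπ s a) (hξ0 s)) (hX0 s a)
    _ = D * (∑ s, ∑ a, ξ s * πb s a * c s a
          + γ * ∑ s, ∑ a, ξ s * πb s a * ∑ s', P s a s' * g s') := by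
        simp only [← mul_sum, mul_add, sum_add_distrib, mul_left_comm _ γ]
    _ = D * (∑ s, ∑ a, ξ s * πb s a * c s a + γ * ∑ s, ξ s * g s) := by
        rw [sum_stationary_mul_sum_kernel hstat]

end Stationary

section Neighborhood

variable {C : ℝ} {π π' : S → A → ℝ}

/-- The constant `D` of the theorem. -/
noncomputable def maxRatio (π π' : S → A → ℝ)
    (hne : ((univ : Finset (S × A)).filter fun p => 0 < π p.1 p.2).Nonempty) : ℝ :=
  ((univ : Finset (S × A)).filter fun p => 0 < π p.1 p.2).sup' hne
    fun p => π' p.1 p.2 / π p.1 p.2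

lemma InNbhd.le_maxRatio_mul (h : InNbhd C π π') (hπ0 : ∀ s a, 0 ≤ π s a)
    (hne : ((univ : Finset (S × A)).filter fun p => 0 < π p.1 p.2).Nonempty) (s : S) (a : A) :
    π' s a ≤ maxRatio π π' hne * π s a := by
  rcases (hπ0 s a).lt_or_eq with hpos | hzero
  · rw [← div_le_iff₀ hpos]
    exact le_sup' (fun p : S × A => π' p.1 p.2 / π p.1 p.2)
      (mem_filter.2 ⟨mem_univ (s, a), hpos⟩)
  · have : ¬ 0 < π' s a := fun h' => (h.2.1 s a).2 h' |>.ne' hzero.symm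
    rw [← hzero, mul_zero]
    exact not_lt.1 this

lemma InNbhd.maxRatio_mem_Icc (h : InNbhd C π π')
    (hne : ((univ : Finset (S × A)).filter fun p => 0 < π p.1 p.2).Nonempty) :
    maxRatio π π' hne ∈ Set.Icc (2 - C) C := by
  obtain ⟨p, hp⟩ := hne
  refine ⟨?_, sup'_le _ _ fun q hq => (h.2.2 q.1 q.2 (mem_filter.1 hq).2).2⟩
  exact (h.2.2 p.1 p.2 (mem_filter.1 hp).2).1.trans
    (le_sup' (fun p : S × A => π' p.1 p.2 / π p.1 p.2) hp)

lemma pos_and_one_div_sub_pos_of_mem_Icc {γ C D : ℝ} (hγ : 1 / 2 < γ) (hC : C < 1 / γ)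
    (hD : D ∈ Set.Icc (2 - C) C) : 0 < D ∧ 0 < 1 / D - γ := by
  have hγpos : 0 < γ := by linarith
  have hD0 : 0 < D := by
    have : 1 / γ < 2 := by rw [div_lt_iff₀ hγpos]; linarith
    linarith [hD.1]
  refine ⟨hD0, ?_⟩
  rw [sub_pos, lt_div_iff₀ hD0]
  calc γ * D ≤ γ * C := mul_le_mul_of_nonneg_left hD.2 hγpos.le
    _ < γ * (1 / γ) := mul_lt_mul_of_pos_left hC hγpos
    _ = 1 := by field_simp

end Neighborhood

lemma sum_filter_coupling_le {ξ : S → ℝ} {lam : S × S → ℝ} (hlam0 : ∀ q, 0 ≤ lam q)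
    (hfst : ∀ s, ∑ t, lam (s, t) = ξ s) (hsnd : ∀ t, ∑ s, lam (s, t) = ξ t)
    {g : S → ℝ} (hg0 : ∀ s, 0 ≤ g s) {ε : ℝ} (hε : 0 < ε) {p : S × S → Prop} [DecidablePred p]
    (hp : ∀ q, p q → ε < g q.1 + g q.2) :
    ∑ q ∈ univ.filter p, lam q ≤ 2 * (∑ s, ξ s * g s) / ε := by
  have hmarginals : ∑ q : S × S, lam q * (g q.1 + g q.2) = 2 * ∑ s, ξ s * g s := by
    have hfst' : ∑ q : S × S, lam q * g q.1 = ∑ s, ξ s * g s := by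
      simp only [← hfst, sum_mul, Fintype.sum_prod_type]
    have hsnd' : ∑ q : S × S, lam q * g q.2 = ∑ s, ξ s * g s := by
      simp only [← hsnd, sum_mul, Fintype.sum_prod_type_right]
    simp only [mul_add, sum_add_distrib, hfst', hsnd', two_mul]
  rw [le_div_iff₀ hε, sum_mul]
  calc ∑ q ∈ univ.filter p, lam q * ε ≤ ∑ q ∈ univ.filter p, lam q * (g q.1 + g q.2) :=
        sum_le_sum fun q hq => mul_le_mul_of_nonneg_left (hp q (mem_filter.1 hq).2).le (hlam0 q)
    _ ≤ ∑ q : S × S, lam q * (g q.1 + g q.2) :=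
        sum_le_sum_of_subset_of_nonneg (filter_subset _ _) fun q _ _ =>
          mul_nonneg (hlam0 q) (add_nonneg (hg0 _) (hg0 _))
    _ = 2 * ∑ s, ξ s * g s := hmarginals

lemma two_mul_div_le_of_le_mul_add {D γ E B ε : ℝ} (hD : 0 < D) (hgap : 0 < 1 / D - γ)
    (hE0 : 0 ≤ E) (hε : 0 < ε) (hE : E ≤ D * (B + γ * E)) :
    2 * E / ε ≤ 4 * B / (ε * (1 / D - γ)) := by
  have hEgap : E * (1 / D - γ) ≤ B := by
    refine le_of_mul_le_mul_left ?_ hD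
    rw [show D * (E * (1 / D - γ)) = E - D * γ * E by field_simp]
    linear_combination hE
  rw [div_le_div_iff₀ hε (mul_pos hε hgap)]
  nlinarith [mul_le_mul_of_nonneg_left hEgap hε.le, mul_nonneg hE0 (mul_nonneg hε.le hgap.le)]

theorem representation_quality_general
    [MetricSpace SL] [DecidableEq SL]
    (P : S → A → S → ℝ)
    (hP : ∀ s a, (∀ s', 0 ≤ P s a s') ∧ (∑ s', P s a s') = 1)
    (R : S → A → ℝ) (γ : ℝ) (hγ : 1 / 2 < γ ∧ γ < 1)
    (Pbar : SL → A → SL → ℝ)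
    (hPbar : ∀ x a, (∀ x', 0 ≤ Pbar x a x') ∧ (∑ x', Pbar x a x') = 1)
    (Rbar : SL → A → ℝ)
    (φ : S → SL)
    (πbar : SL → A → ℝ) (hπbar : IsPolicy πbar)
    (πb : S → A → ℝ) (hπb : IsPolicy πb)
    (C : ℝ) (hC : 1 < C ∧ C < 1 / γ)
    (hmem : InNbhd C πb (fun s a => πbar (φ s) a))
    (hne : ((Finset.univ : Finset (S × A)).filter (fun p => 0 < πb p.1 p.2)).Nonempty)
    (D : ℝ)
    (hD : D = ((Finset.univ : Finset (S × A)).filter (fun p => 0 < πb p.1 p.2)).sup' hne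
      (fun p => πbar (φ p.1) p.2 / πb p.1 p.2))
    (ξ : S → ℝ) (hξ : (∀ s, 0 ≤ ξ s) ∧ (∑ s, ξ s) = 1)
    (hstat : ∀ s', (∑ s, ∑ a, ξ s * πb s a * P s a s') = ξ s')
    (KR KP : ℝ) (hKR0 : 0 ≤ KR) (hKP : KP < 1 / γ)
    (hLipR : ∀ x₁ x₂ : SL,
      |(∑ a, πbar x₁ a * Rbar x₁ a) - (∑ a, πbar x₂ a * Rbar x₂ a)| ≤ KR * dist x₁ x₂)
    (hLipP : ∀ x₁ x₂ : SL,
      Wass (fun x' => ∑ a, πbar x₁ a * Pbar x₁ a x')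
        (fun x' => ∑ a, πbar x₂ a * Pbar x₂ a x') ≤ KP * dist x₁ x₂)
    (KV : ℝ) (hKV : KV = KR / (1 - γ * KP))
    (V : S → ℝ)
    (hV : ∀ s, V s = ∑ a, πbar (φ s) a * (R s a + γ * ∑ s', P s a s' * V s'))
    (LR LP : ℝ)
    (hLR : LR = ∑ s, ∑ a, ξ s * πb s a * |R s a - Rbar (φ s) a|)
    (hLP : LP = ∑ s, ∑ a, ξ s * πb s a *
      Wass (fun x => ∑ s', if φ s' = x then P s a s' else 0) (Pbar (φ s) a))
    (ε δ : ℝ) (hε : 0 < ε)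
    (hδ : δ = 4 * (LR + γ * KV * LP) / (ε * (1 / D - γ))) :
    ∀ lam : S × S → ℝ, (∀ p, 0 ≤ lam p) →
      (∀ s, (∑ t, lam (s, t)) = ξ s) → (∀ t, (∑ s, lam (s, t)) = ξ t) →
      (∑ p ∈ (Finset.univ : Finset (S × S)).filter
        (fun p => KV * dist (φ p.1) (φ p.2) + ε < |V p.1 - V p.2|), lam p) ≤ δ := by
  intro lam hlam0 hfst hsnd
  have hγ0 : 0 ≤ γ := by linarith [hγ.1]
  have hγKP : γ * KP < 1 := by
    rw [mul_comm, ← lt_div_iff₀ (by linarith [hγ.1])]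
    exact hKP
  obtain ⟨Vb, hVb, hVbLip⟩ :=
    exists_bellman_fixedPoint_lipschitz hπbar hPbar hγ0 hγ.2 hKR0 hγKP hLipR hLipP
  rw [← hKV] at hVbLip
  have hKV0 : 0 ≤ KV := hKV ▸ div_nonneg hKR0 (by linarith)
  set g : S → ℝ := fun s => |V s - Vb (φ s)|
  replace hD : D = maxRatio πb (fun s a => πbar (φ s) a) hne := hD
  obtain ⟨hD0, hgap⟩ := pos_and_one_div_sub_pos_of_mem_Icc hγ.1 hC.2
    (hD ▸ hmem.maxRatio_mem_Icc hne)
  have hloss : LR + γ * KV * LP = ∑ s, ∑ a, ξ s * πb s a *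
      (|R s a - Rbar (φ s) a| + γ * KV * Wass (pushforward φ (P s a)) (Pbar (φ s) a)) := by
    simp only [hLR, hLP, mul_add, sum_add_distrib, mul_sum]
    congr 1
    exact sum_congr rfl fun s _ => sum_congr rfl fun a _ => by unfold pushforward; ring
  have hE : ∑ s, ξ s * g s ≤ D * ((LR + γ * KV * LP) + γ * ∑ s, ξ s * g s) := by
    rw [hloss]
    exact sum_stationary_mul_le hξ.1 hstat (fun s a => (hP s a).1)
      (hD ▸ hmem.le_maxRatio_mul (fun s a => (hπb s).1 a) hne) hγ0
      (fun s a => add_nonneg (abs_nonneg _) (mul_nonneg (mul_nonneg hγ0 hKV0) (wass_nonneg _ _)))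
      (fun s => abs_nonneg _)
      (abs_value_sub_latent_value_le hP hPbar hπbar hγ0 hKV0 hV hVb hVbLip)
  have hbad : ∀ q : S × S, KV * dist (φ q.1) (φ q.2) + ε < |V q.1 - V q.2| →
      ε < g q.1 + g q.2 := fun q hq => by
    linarith [abs_sub_le (V q.1) (Vb (φ q.1)) (V q.2),
      abs_sub_le (Vb (φ q.1)) (Vb (φ q.2)) (V q.2), abs_sub_comm (Vb (φ q.2)) (V q.2),
      hVbLip (φ q.1) (φ q.2)]
  refine (sum_filter_coupling_le hlam0 hfst hsnd (g := g) (fun _ => abs_nonneg _) hε hbad).trans ?_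
  rw [hδ]
  exact two_mul_div_le_of_le_mul_add hD0 hgap
    (sum_nonneg fun s _ => mul_nonneg (hξ.1 s) (abs_nonneg _)) hε hE

/-- Theorem 4, Deep SPI for representation learning: for every
coupling of the stationary distribution with itself, the probability that the
value difference exceeds `K_V·d̄(φ(s₁), φ(s₂)) + ε` is at most `δ`. -/
theorem representation_quality
    [Nonempty S] [Nonempty A] [Nonempty SL] [MetricSpace SL] [DecidableEq SL]
    (P : S → A → S → ℝ)
    (hP : ∀ s a, (∀ s', 0 ≤ P s a s') ∧ (∑ s', P s a s') = 1)
    (R : S → A → ℝ) (γ : ℝ) (hγ : 1 / 2 < γ ∧ γ < 1)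
    (Pbar : SL → A → SL → ℝ)
    (hPbar : ∀ x a, (∀ x', 0 ≤ Pbar x a x') ∧ (∑ x', Pbar x a x') = 1)
    (Rbar : SL → A → ℝ)
    (φ : S → SL)
    (πbar : SL → A → ℝ) (hπbar : IsPolicy πbar)
    (πb : S → A → ℝ) (hπb : IsPolicy πb)
    (C : ℝ) (hC : 1 < C ∧ C < 1 / γ)
    (hmem : InNbhd C πb (fun s a => πbar (φ s) a))
    (hne : ((Finset.univ : Finset (S × A)).filter (fun p => 0 < πb p.1 p.2)).Nonempty)
    (D : ℝ)
    (hD : D = ((Finset.univ : Finset (S × A)).filter (fun p => 0 < πb p.1 p.2)).sup' hne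
      (fun p => πbar (φ p.1) p.2 / πb p.1 p.2))
    (ξ : S → ℝ) (hξ : (∀ s, 0 ≤ ξ s) ∧ (∑ s, ξ s) = 1)
    (hstat : ∀ s', (∑ s, ∑ a, ξ s * πb s a * P s a s') = ξ s')
    (KR KP : ℝ) (hKR0 : 0 ≤ KR) (hKP0 : 0 ≤ KP) (hKP : KP < 1 / γ)
    (hLipR : ∀ x₁ x₂ : SL,
      |(∑ a, πbar x₁ a * Rbar x₁ a) - (∑ a, πbar x₂ a * Rbar x₂ a)| ≤ KR * dist x₁ x₂)
    (hLipP : ∀ x₁ x₂ : SL,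
      Wass (fun x' => ∑ a, πbar x₁ a * Pbar x₁ a x')
        (fun x' => ∑ a, πbar x₂ a * Pbar x₂ a x') ≤ KP * dist x₁ x₂)
    (KV : ℝ) (hKV : KV = KR / (1 - γ * KP))
    (V : S → ℝ)
    (hV : ∀ s, V s = ∑ a, πbar (φ s) a * (R s a + γ * ∑ s', P s a s' * V s'))
    (LR LP : ℝ)
    (hLR : LR = ∑ s, ∑ a, ξ s * πb s a * |R s a - Rbar (φ s) a|)
    (hLP : LP = ∑ s, ∑ a, ξ s * πb s a *
      Wass (fun x => ∑ s', if φ s' = x then P s a s' else 0) (Pbar (φ s) a))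
    (ε δ : ℝ) (hε : 0 < ε)
    (hδ : δ = 4 * (LR + γ * KV * LP) / (ε * (1 / D - γ))) :
    ∀ lam : S × S → ℝ, (∀ p, 0 ≤ lam p) →
      (∀ s, (∑ t, lam (s, t)) = ξ s) → (∀ t, (∑ s, lam (s, t)) = ξ t) →
      (∑ p ∈ (Finset.univ : Finset (S × S)).filter
        (fun p => KV * dist (φ p.1) (φ p.2) + ε < |V p.1 - V p.2|), lam p) ≤ δ :=
  representation_quality_general P hP R γ hγ Pbar hPbar Rbar φ πbar hπbar πb hπb C hC hmem hne D hD
    ξ hξ hstat KR KP hKR0 hKP hLipR hLipP KV hKV V hV LR LP hLR hLP ε δ hε hδ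
end

section
/- Let M = ⟨S, A, P, R, γ⟩ be a finite MDP with γ ∈ [0,1), M̄ = ⟨S̄, A, P̄, R̄, γ⟩ a latent MDP over a finite metric space (S̄, d̄), φ : S → S̄ an encoder, π̄ a latent policy, and π_b a baseline policy with supp π_b(·|s) = supp π̄(·|φ(s)) for all s ∈ S. Let D = max{π̄(a|φ(s))/π_b(a|s) : s ∈ S, a ∈ supp π_b(·|s)} with γ·D < 1, and let ξ be a stationary distribution of π_b. Assume the latent model has Lipschitz constants K_R̄, K_P̄ under π̄ with γ·K_P̄ < 1, and set K_V = K_R̄/(1 − γ·K_P̄). Then for every ε > 0, ξ({s ∈ S : |V^{π̄∘φ}(s) − V̄^{π̄}(φ(s))| > ε/2}) ≤ 2·(L_R + γ·K_V·L_P)/(ε·(1/D − γ)), where L_R, L_P are the reward and transition losses with respect to ξ and π_b. -/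
/-!
The value gap `g s = |V s - V̄ (φ s)|` obeys a one-step recursion: subtracting the two Bellman
equations and comparing `E_{P(·|s,a)} V̄ ∘ φ` with `E_{P̄(·|φ s,a)} V̄` through the `K_V`-Lipschitz
continuity of `V̄` gives
`g s ≤ ∑ₐ π̄(a|φ s) (|R - R̄| + γ K_V W(φ♯P, P̄) + γ E_P g)`.
Averaging against `ξ`, bounding `π̄(a|φ s) ≤ D π_b(a|s)` and using stationarity of `ξ` turns this
into `E_ξ g ≤ D (L_R + γ K_V L_P) + γ D E_ξ g`, i.e. `E_ξ g ≤ (L_R + γ K_V L_P) / (1/D - γ)`, and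
Markov's inequality at level `ε/2` concludes.
-/

open Finset

variable {S A SL : Type*} [Fintype S] [Fintype A] [Fintype SL]

section Wasserstein

variable {T : Type*} [Fintype T] [MetricSpace T]

lemma wass_nonneg_s13 (μ ν : T → ℝ) : 0 ≤ Wass μ ν := by
  refine Real.sInf_nonneg ?_
  rintro _ ⟨lam, hlam, -, -, rfl⟩
  exact sum_nonneg fun p _ => mul_nonneg (hlam p) dist_nonneg

lemma abs_sum_mul_sub_sum_mul_le_of_coupling {μ ν : T → ℝ} {lam : T × T → ℝ}
    (hlam : ∀ p, 0 ≤ lam p) (hμ : ∀ x, ∑ y, lam (x, y) = μ x)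
    (hν : ∀ y, ∑ x, lam (x, y) = ν y) {f : T → ℝ} {K : ℝ}
    (hf : ∀ x y, |f x - f y| ≤ K * dist x y) :
    |∑ x, μ x * f x - ∑ x, ν x * f x| ≤ K * ∑ p : T × T, lam p * dist p.1 p.2 := by
  have hdiff : ∑ x, μ x * f x - ∑ x, ν x * f x = ∑ p : T × T, lam p * (f p.1 - f p.2) := by
    simp only [← hμ, ← hν, sum_mul, Fintype.sum_prod_type, mul_sub, sum_sub_distrib]
    rw [sum_comm (f := fun y x => lam (x, y) * f y)]
  rw [hdiff, mul_sum]
  refine (abs_sum_le_sum_abs _ _).trans (sum_le_sum fun p _ => ?_)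
  rw [abs_mul, abs_of_nonneg (hlam p), mul_left_comm]
  exact mul_le_mul_of_nonneg_left (hf p.1 p.2) (hlam p)

/-- The easy half of Kantorovich–Rubinstein duality. -/
lemma abs_sum_mul_sub_sum_mul_le_mul_wass_s13 {μ ν : T → ℝ}
    (hμ0 : ∀ x, 0 ≤ μ x) (hμ1 : ∑ x, μ x = 1) (hν0 : ∀ x, 0 ≤ ν x) (hν1 : ∑ x, ν x = 1)
    {f : T → ℝ} {K : ℝ} (hK : 0 ≤ K) (hf : ∀ x y, |f x - f y| ≤ K * dist x y) :
    |∑ x, μ x * f x - ∑ x, ν x * f x| ≤ K * Wass μ ν := by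
  have hprod_left : ∀ x, ∑ y, μ x * ν y = μ x := fun x => by rw [← mul_sum, hν1, mul_one]
  have hprod_right : ∀ y, ∑ x, μ x * ν y = ν y := fun y => by rw [← sum_mul, hμ1, one_mul]
  have hprod := abs_sum_mul_sub_sum_mul_le_of_coupling (lam := fun p => μ p.1 * ν p.2)
    (fun p => mul_nonneg (hμ0 _) (hν0 _)) hprod_left hprod_right hf
  rcases hK.eq_or_lt with rfl | hKpos
  · simpa using hprod
  rw [← div_le_iff₀' hKpos]
  refine le_csInf ⟨_, fun p : T × T => μ p.1 * ν p.2, fun p => mul_nonneg (hμ0 _) (hν0 _),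
    hprod_left, hprod_right, rfl⟩ ?_
  rintro _ ⟨lam, hlam, hμ, hν, rfl⟩
  rw [div_le_iff₀' hKpos]
  exact abs_sum_mul_sub_sum_mul_le_of_coupling hlam hμ hν hf

end Wasserstein

section Lipschitz

variable {T : Type*} [Finite T] [MetricSpace T]

/-- On a finite space the best Lipschitz constant `C` of `f` is attained, so a self-improving
bound `C ↦ a + b * C` with `b < 1` forces `C ≤ a / (1 - b)`. -/
lemma abs_sub_le_div_mul_dist_of_self_bound {f : T → ℝ} {a b : ℝ} (ha : 0 ≤ a) (hb : b < 1)
    (hself : ∀ C, 0 ≤ C → (∀ x y, |f x - f y| ≤ C * dist x y) →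
      ∀ x y, |f x - f y| ≤ (a + b * C) * dist x y) (x y : T) :
    |f x - f y| ≤ a / (1 - b) * dist x y := by
  have : Nonempty T := ⟨x⟩
  let ratio : T × T → ℝ := fun p => |f p.1 - f p.2| / dist p.1 p.2
  obtain ⟨p₀, hp₀⟩ := Finite.exists_max (α := T × T) ratio
  set C := ratio p₀
  have hC0 : 0 ≤ C := div_nonneg (abs_nonneg _) dist_nonneg
  have hlip : ∀ x y, |f x - f y| ≤ C * dist x y := by
    intro x y
    rcases eq_or_ne x y with rfl | hxy
    · simp
    · exact (div_le_iff₀ (dist_pos.mpr hxy)).mp (hp₀ (x, y))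
  have hCle : C ≤ a + b * C := by
    rcases eq_or_ne p₀.1 p₀.2 with heq | hne
    · have : C = 0 := by simp [C, ratio, heq]
      rw [this, mul_zero, add_zero]; exact ha
    · exact (div_le_iff₀ (dist_pos.mpr hne)).mpr (hself C hC0 hlip p₀.1 p₀.2)
  have hCa : C ≤ a / (1 - b) := by rw [le_div_iff₀ (by linarith)]; linarith
  exact (hlip x y).trans (mul_le_mul_of_nonneg_right hCa dist_nonneg)

end Lipschitz

section PolicyEvaluation

variable {ι κ : Type*} [Fintype ι] [Fintype κ]

lemma sum_mul_add_mul_sum_eq (w r : ι → ℝ) (γ : ℝ) (Q : ι → κ → ℝ) (f : κ → ℝ) :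
    ∑ a, w a * (r a + γ * ∑ y, Q a y * f y) =
      ∑ a, w a * r a + γ * ∑ y, (∑ a, w a * Q a y) * f y := by
  simp only [mul_add, sum_add_distrib, mul_sum, sum_mul]
  rw [sum_comm (f := fun y a => γ * (w a * Q a y * f y))]
  congr 1
  exact sum_congr rfl fun a _ => sum_congr rfl fun y _ => by ring

lemma sum_sum_mul_eq_one {w : ι → ℝ} {Q : ι → κ → ℝ} (hw : ∑ a, w a = 1)
    (hQ : ∀ a, ∑ y, Q a y = 1) : ∑ y, ∑ a, w a * Q a y = 1 := by
  simp only [sum_comm (f := fun y a => w a * Q a y), ← mul_sum, hQ, mul_one, hw]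

end PolicyEvaluation

lemma abs_sub_le_mul_dist_of_bellman {T : Type*} [Fintype T] [MetricSpace T]
    {r : T → ℝ} {Q : T → T → ℝ} (hQ0 : ∀ x y, 0 ≤ Q x y) (hQ1 : ∀ x, ∑ y, Q x y = 1)
    {γ KR KP : ℝ} (hγ : 0 ≤ γ) (hKR : 0 ≤ KR) (hγKP : γ * KP < 1)
    (hr : ∀ x y, |r x - r y| ≤ KR * dist x y) (hQ : ∀ x y, Wass (Q x) (Q y) ≤ KP * dist x y)
    {f : T → ℝ} (hf : ∀ x, f x = r x + γ * ∑ y, Q x y * f y) (x y : T) :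
    |f x - f y| ≤ KR / (1 - γ * KP) * dist x y := by
  refine abs_sub_le_div_mul_dist_of_self_bound hKR hγKP (fun C hC hlip x y => ?_) x y
  have hQf : |∑ z, Q x z * f z - ∑ z, Q y z * f z| ≤ C * (KP * dist x y) :=
    (abs_sum_mul_sub_sum_mul_le_mul_wass_s13 (hQ0 x) (hQ1 x) (hQ0 y) (hQ1 y) hC hlip).trans
      (mul_le_mul_of_nonneg_left (hQ x y) hC)
  calc |f x - f y|
      = |(r x - r y) + γ * (∑ z, Q x z * f z - ∑ z, Q y z * f z)| := by
        rw [hf x, hf y]; congr 1; ring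
    _ ≤ |r x - r y| + γ * |∑ z, Q x z * f z - ∑ z, Q y z * f z| := by
        rw [← abs_of_nonneg hγ, ← abs_mul, abs_of_nonneg hγ]; exact abs_add_le _ _
    _ ≤ KR * dist x y + γ * (C * (KP * dist x y)) := by gcongr; exact hr x y
    _ = (KR + γ * KP * C) * dist x y := by ring

lemma abs_value_sub_le_mul_dist [MetricSpace SL] {Pbar : SL → A → SL → ℝ}
    (hPbar : ∀ x a, (∀ x', 0 ≤ Pbar x a x') ∧ ∑ x', Pbar x a x' = 1) {Rbar : SL → A → ℝ}
    {πbar : SL → A → ℝ} (hπbar : IsPolicy πbar) {γ KR KP : ℝ} (hγ : 0 ≤ γ) (hKR : 0 ≤ KR)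
    (hγKP : γ * KP < 1)
    (hLipR : ∀ x₁ x₂ : SL,
      |∑ a, πbar x₁ a * Rbar x₁ a - ∑ a, πbar x₂ a * Rbar x₂ a| ≤ KR * dist x₁ x₂)
    (hLipP : ∀ x₁ x₂ : SL, Wass (fun x' => ∑ a, πbar x₁ a * Pbar x₁ a x')
      (fun x' => ∑ a, πbar x₂ a * Pbar x₂ a x') ≤ KP * dist x₁ x₂)
    {Vbar : SL → ℝ}
    (hVbar : ∀ x, Vbar x = ∑ a, πbar x a * (Rbar x a + γ * ∑ x', Pbar x a x' * Vbar x'))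
    (x y : SL) :
    |Vbar x - Vbar y| ≤ KR / (1 - γ * KP) * dist x y :=
  abs_sub_le_mul_dist_of_bellman (Q := fun x y => ∑ a, πbar x a * Pbar x a y)
    (fun x y => sum_nonneg fun a _ => mul_nonneg ((hπbar x).1 a) ((hPbar x a).1 y))
    (fun x => sum_sum_mul_eq_one (hπbar x).2 fun a => (hPbar x a).2) hγ hKR hγKP hLipR hLipP
    (fun x => (hVbar x).trans (sum_mul_add_mul_sum_eq _ _ _ _ _)) x y

section Pushforward

variable [DecidableEq SL]

lemma sum_mul_comp_eq_sum_pushforward (φ : S → SL) (p : S → ℝ) (f : SL → ℝ) :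
    ∑ s, p s * f (φ s) = ∑ x, (∑ s, if φ s = x then p s else 0) * f x := by
  simp only [sum_mul, ite_mul, zero_mul]
  rw [sum_comm]
  exact sum_congr rfl fun s _ => by rw [sum_ite_eq]; simp

variable [MetricSpace SL]

lemma abs_sum_mul_sub_sum_mul_le_of_encoder {φ : S → SL} {p : S → ℝ} {q : SL → ℝ}
    (hp0 : ∀ s, 0 ≤ p s) (hp1 : ∑ s, p s = 1) (hq0 : ∀ x, 0 ≤ q x) (hq1 : ∑ x, q x = 1)
    {V : S → ℝ} {Vbar : SL → ℝ} {K : ℝ} (hK : 0 ≤ K)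
    (hVbar : ∀ x y, |Vbar x - Vbar y| ≤ K * dist x y) :
    |∑ s, p s * V s - ∑ x, q x * Vbar x| ≤
      ∑ s, p s * |V s - Vbar (φ s)| +
        K * Wass (fun x => ∑ s, if φ s = x then p s else 0) q := by
  have hpush0 : ∀ x, 0 ≤ ∑ s, if φ s = x then p s else 0 := fun x =>
    sum_nonneg fun s _ => by split_ifs <;> simp [hp0 s]
  have hpush1 : ∑ x, ∑ s, (if φ s = x then p s else 0) = 1 := by
    simpa [hp1] using (sum_mul_comp_eq_sum_pushforward φ p fun _ => 1).symm
  have hgap : |∑ s, p s * (V s - Vbar (φ s))| ≤ ∑ s, p s * |V s - Vbar (φ s)| :=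
    (abs_sum_le_sum_abs _ _).trans_eq <| sum_congr rfl fun s _ => by
      rw [abs_mul, abs_of_nonneg (hp0 s)]
  calc |∑ s, p s * V s - ∑ x, q x * Vbar x|
      = |∑ s, p s * (V s - Vbar (φ s)) +
          (∑ x, (∑ s, if φ s = x then p s else 0) * Vbar x - ∑ x, q x * Vbar x)| := by
        rw [← sum_mul_comp_eq_sum_pushforward]
        simp only [mul_sub, sum_sub_distrib, sub_add_sub_cancel]
    _ ≤ _ := (abs_add_le _ _).trans (add_le_add hgap
        (abs_sum_mul_sub_sum_mul_le_mul_wass_s13 hpush0 hpush1 hq0 hq1 hK hVbar))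

end Pushforward

lemma mul_sum_filter_lt_le_sum_mul {ι : Type*} (s : Finset ι) {w g : ι → ℝ}
    (hw : ∀ i ∈ s, 0 ≤ w i) (hg : ∀ i ∈ s, 0 ≤ g i) (t : ℝ) :
    t * ∑ i ∈ s with t < g i, w i ≤ ∑ i ∈ s, w i * g i :=
  calc t * ∑ i ∈ s with t < g i, w i
      = ∑ i ∈ s with t < g i, w i * t := by rw [mul_sum]; simp only [mul_comm]
    _ ≤ ∑ i ∈ s with t < g i, w i * g i := sum_le_sum fun i hi =>
        mul_le_mul_of_nonneg_left (mem_filter.mp hi).2.le (hw i (mem_filter.mp hi).1)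
    _ ≤ ∑ i ∈ s, w i * g i := sum_le_sum_of_subset_of_nonneg (filter_subset _ _)
        fun i hi _ => mul_nonneg (hw i hi) (hg i hi)

section ImportanceRatio

variable {ι : Type*} [Fintype ι] {p q : ι → ℝ}

lemma le_sup'_div_mul (hq : ∀ i, 0 ≤ q i) (hpq : ∀ i, 0 < p i → 0 < q i)
    (hne : (univ.filter fun i => 0 < q i).Nonempty) (i : ι) :
    p i ≤ (univ.filter fun i => 0 < q i).sup' hne (fun i => p i / q i) * q i := by
  rcases (hq i).eq_or_lt with hqi | hqi
  · rw [← hqi, mul_zero]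
    exact not_lt.mp fun hpi => (hpq i hpi).ne' hqi.symm
  · rw [← div_le_iff₀ hqi]
    exact le_sup' (fun i => p i / q i) (mem_filter.mpr ⟨mem_univ i, hqi⟩)

lemma sup'_div_pos (hqp : ∀ i, 0 < q i → 0 < p i)
    (hne : (univ.filter fun i => 0 < q i).Nonempty) :
    0 < (univ.filter fun i => 0 < q i).sup' hne (fun i => p i / q i) := by
  obtain ⟨i, hi⟩ := hne
  have hqi : 0 < q i := (mem_filter.mp hi).2
  exact (div_pos (hqp i hqi) hqi).trans_le (le_sup' (fun i => p i / q i) hi)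

end ImportanceRatio

section StationaryAverage

variable {ξ : S → ℝ} {πb : S → A → ℝ}

lemma sum_mul_sum_mul_le_mul_sum_sum {π c : S → A → ℝ} {D : ℝ} (hξ : ∀ s, 0 ≤ ξ s)
    (hπ : ∀ s a, π s a ≤ D * πb s a) (hc : ∀ s a, 0 ≤ c s a) :
    ∑ s, ξ s * ∑ a, π s a * c s a ≤ D * ∑ s, ∑ a, ξ s * πb s a * c s a := by
  simp only [mul_sum]
  refine sum_le_sum fun s _ => sum_le_sum fun a _ => ?_
  calc ξ s * (π s a * c s a) ≤ ξ s * (D * πb s a * c s a) := by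
        gcongr
        · exact hξ s
        · exact hc s a
        · exact hπ s a
    _ = D * (ξ s * πb s a * c s a) := by ring

lemma sum_sum_mul_sum_eq_of_stationary {P : S → A → S → ℝ}
    (hstat : ∀ s', ∑ s, ∑ a, ξ s * πb s a * P s a s' = ξ s') (h : S → ℝ) :
    ∑ s, ∑ a, ξ s * πb s a * ∑ s', P s a s' * h s' = ∑ s, ξ s * h s := by
  calc ∑ s, ∑ a, ξ s * πb s a * ∑ s', P s a s' * h s'
      = ∑ s', (∑ s, ∑ a, ξ s * πb s a * P s a s') * h s' := by
        simp only [mul_sum, sum_mul, mul_assoc]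
        exact sum_comm_cycle
    _ = ∑ s, ξ s * h s := by simp only [hstat]

lemma sum_mul_le_of_forall_le_bellman {π c : S → A → ℝ} {P : S → A → S → ℝ} {g : S → ℝ}
    {γ D : ℝ} (hξ : ∀ s, 0 ≤ ξ s) (hstat : ∀ s', ∑ s, ∑ a, ξ s * πb s a * P s a s' = ξ s')
    (hπ : ∀ s a, π s a ≤ D * πb s a) (hP : ∀ s a s', 0 ≤ P s a s') (hc : ∀ s a, 0 ≤ c s a)
    (hγ : 0 ≤ γ) (hg0 : ∀ s, 0 ≤ g s)
    (hg : ∀ s, g s ≤ ∑ a, π s a * (c s a + γ * ∑ s', P s a s' * g s')) :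
    ∑ s, ξ s * g s ≤ D * (∑ s, ∑ a, ξ s * πb s a * c s a + γ * ∑ s, ξ s * g s) :=
  calc ∑ s, ξ s * g s ≤ ∑ s, ξ s * ∑ a, π s a * (c s a + γ * ∑ s', P s a s' * g s') :=
        sum_le_sum fun s _ => mul_le_mul_of_nonneg_left (hg s) (hξ s)
    _ ≤ D * ∑ s, ∑ a, ξ s * πb s a * (c s a + γ * ∑ s', P s a s' * g s') :=
        sum_mul_sum_mul_le_mul_sum_sum hξ hπ fun s a => add_nonneg (hc s a) <|
          mul_nonneg hγ <| sum_nonneg fun s' _ => mul_nonneg (hP s a s') (hg0 s')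
    _ = D * (∑ s, ∑ a, ξ s * πb s a * c s a + γ * ∑ s, ξ s * g s) := by
        rw [← sum_sum_mul_sum_eq_of_stationary hstat g]
        simp only [mul_add, sum_add_distrib, mul_left_comm _ γ, ← mul_sum]

end StationaryAverage

lemma le_div_one_div_sub_of_le_mul_add {E X D γ : ℝ} (hD : 0 < D) (hγD : γ * D < 1)
    (h : E ≤ D * (X + γ * E)) : E ≤ X / (1 / D - γ) := by
  have hu : 1 / D - γ = (1 - γ * D) / D := by field_simp
  rw [hu, le_div_iff₀ (div_pos (by linarith) hD), mul_div_assoc', div_le_iff₀ hD]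
  linarith

lemma abs_bellman_sub_latent_bellman_le [MetricSpace SL] [DecidableEq SL] {φ : S → SL}
    {w r rbar : A → ℝ} {p : A → S → ℝ} {q : A → SL → ℝ} (hw : ∀ a, 0 ≤ w a)
    (hp : ∀ a, (∀ s, 0 ≤ p a s) ∧ ∑ s, p a s = 1) (hq : ∀ a, (∀ x, 0 ≤ q a x) ∧ ∑ x, q a x = 1)
    {γ K : ℝ} (hγ : 0 ≤ γ) (hK : 0 ≤ K) {V : S → ℝ} {Vbar : SL → ℝ}
    (hVbar : ∀ x y, |Vbar x - Vbar y| ≤ K * dist x y) :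
    |∑ a, w a * (r a + γ * ∑ s, p a s * V s) - ∑ a, w a * (rbar a + γ * ∑ x, q a x * Vbar x)| ≤
      ∑ a, w a * ((|r a - rbar a| +
        γ * K * Wass (fun x => ∑ s, if φ s = x then p a s else 0) (q a)) +
          γ * ∑ s, p a s * |V s - Vbar (φ s)|) := by
  rw [← sum_sub_distrib]
  refine (abs_sum_le_sum_abs _ _).trans (sum_le_sum fun a _ => ?_)
  have hstep := abs_sum_mul_sub_sum_mul_le_of_encoder (φ := φ) (hp a).1 (hp a).2 (hq a).1
    (hq a).2 (V := V) hK hVbar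
  calc |w a * (r a + γ * ∑ s, p a s * V s) - w a * (rbar a + γ * ∑ x, q a x * Vbar x)|
      = w a * |(r a - rbar a) + γ * (∑ s, p a s * V s - ∑ x, q a x * Vbar x)| := by
        rw [← mul_sub, abs_mul, abs_of_nonneg (hw a)]; congr 2; ring
    _ ≤ w a * (|r a - rbar a| + γ * |∑ s, p a s * V s - ∑ x, q a x * Vbar x|) := by
        gcongr
        · exact hw a
        · exact (abs_add_le _ _).trans_eq (by rw [abs_mul, abs_of_nonneg hγ])
    _ ≤ _ := by
        refine mul_le_mul_of_nonneg_left ?_ (hw a)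
        linarith [mul_le_mul_of_nonneg_left hstep hγ]

theorem value_gap_markov_bound_general
    [MetricSpace SL] [DecidableEq SL]
    (P : S → A → S → ℝ)
    (hP : ∀ s a, (∀ s', 0 ≤ P s a s') ∧ (∑ s', P s a s') = 1)
    (R : S → A → ℝ) (γ : ℝ) (hγ : 0 ≤ γ ∧ γ < 1)
    (Pbar : SL → A → SL → ℝ)
    (hPbar : ∀ x a, (∀ x', 0 ≤ Pbar x a x') ∧ (∑ x', Pbar x a x') = 1)
    (Rbar : SL → A → ℝ)
    (φ : S → SL)
    (πbar : SL → A → ℝ) (hπbar : IsPolicy πbar)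
    (πb : S → A → ℝ) (hπb : IsPolicy πb)
    (hsupp : ∀ s a, (0 < πb s a ↔ 0 < πbar (φ s) a))
    (hne : ((Finset.univ : Finset (S × A)).filter (fun p => 0 < πb p.1 p.2)).Nonempty)
    (D : ℝ)
    (hD : D = ((Finset.univ : Finset (S × A)).filter (fun p => 0 < πb p.1 p.2)).sup' hne
      (fun p => πbar (φ p.1) p.2 / πb p.1 p.2))
    (hγD : γ * D < 1)
    (ξ : S → ℝ) (hξ : (∀ s, 0 ≤ ξ s) ∧ (∑ s, ξ s) = 1)
    (hstat : ∀ s', (∑ s, ∑ a, ξ s * πb s a * P s a s') = ξ s')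
    (KR KP : ℝ) (hKR0 : 0 ≤ KR) (hγKP : γ * KP < 1)
    (hLipR : ∀ x₁ x₂ : SL,
      |(∑ a, πbar x₁ a * Rbar x₁ a) - (∑ a, πbar x₂ a * Rbar x₂ a)| ≤ KR * dist x₁ x₂)
    (hLipP : ∀ x₁ x₂ : SL,
      Wass (fun x' => ∑ a, πbar x₁ a * Pbar x₁ a x')
        (fun x' => ∑ a, πbar x₂ a * Pbar x₂ a x') ≤ KP * dist x₁ x₂)
    (KV : ℝ) (hKV : KV = KR / (1 - γ * KP))
    (V : S → ℝ)
    (hV : ∀ s, V s = ∑ a, πbar (φ s) a * (R s a + γ * ∑ s', P s a s' * V s'))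
    (Vbar : SL → ℝ)
    (hVbar : ∀ x, Vbar x = ∑ a, πbar x a * (Rbar x a + γ * ∑ x', Pbar x a x' * Vbar x'))
    (LR LP : ℝ)
    (hLR : LR = ∑ s, ∑ a, ξ s * πb s a * |R s a - Rbar (φ s) a|)
    (hLP : LP = ∑ s, ∑ a, ξ s * πb s a *
      Wass (fun x => ∑ s', if φ s' = x then P s a s' else 0) (Pbar (φ s) a)) :
    ∀ ε : ℝ, 0 < ε →
      (∑ s ∈ (Finset.univ : Finset S).filter
        (fun s => ε / 2 < |V s - Vbar (φ s)|), ξ s) ≤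
      2 * (LR + γ * KV * LP) / (ε * (1 / D - γ)) := by
  intro ε hε
  obtain ⟨hγ0, -⟩ := hγ
  have hKV0 : 0 ≤ KV := hKV ▸ div_nonneg hKR0 (by linarith)
  have hVbarLip : ∀ x y, |Vbar x - Vbar y| ≤ KV * dist x y :=
    hKV ▸ abs_value_sub_le_mul_dist hPbar hπbar hγ0 hKR0 hγKP hLipR hLipP hVbar
  set g : S → ℝ := fun s => |V s - Vbar (φ s)|
  set c : S → A → ℝ := fun s a => |R s a - Rbar (φ s) a| +
    γ * KV * Wass (fun x => ∑ s', if φ s' = x then P s a s' else 0) (Pbar (φ s) a)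
  have hgap : ∀ s, g s ≤ ∑ a, πbar (φ s) a * (c s a + γ * ∑ s', P s a s' * g s') := fun s => by
    simp only [g, c]
    rw [hV s, hVbar (φ s)]
    exact abs_bellman_sub_latent_bellman_le (hπbar (φ s)).1 (hP s) (hPbar (φ s)) hγ0 hKV0
      hVbarLip
  have hratio : ∀ s a, πbar (φ s) a ≤ D * πb s a := fun s a => hD ▸
    le_sup'_div_mul (p := fun i : S × A => πbar (φ i.1) i.2) (fun i => (hπb i.1).1 i.2)
      (fun i => (hsupp i.1 i.2).mpr) hne (s, a)
  have hcost : ∑ s, ∑ a, ξ s * πb s a * c s a = LR + γ * KV * LP := by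
    simp only [c, hLR, hLP, mul_add, sum_add_distrib, mul_left_comm _ (γ * KV), ← mul_sum]
  have hD0 : 0 < D := hD ▸ sup'_div_pos (fun i : S × A => (hsupp i.1 i.2).mp) hne
  have hmean : ∑ s, ξ s * g s ≤ (LR + γ * KV * LP) / (1 / D - γ) :=
    le_div_one_div_sub_of_le_mul_add hD0 hγD <| hcost ▸ sum_mul_le_of_forall_le_bellman hξ.1
      hstat hratio (fun s a => (hP s a).1) (fun s a => add_nonneg (abs_nonneg _)
        (mul_nonneg (mul_nonneg hγ0 hKV0) (wass_nonneg_s13 _ _))) hγ0 (fun s => abs_nonneg _) hgap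
  have hmarkov : ε / 2 * ∑ s ∈ univ with ε / 2 < g s, ξ s ≤ ∑ s, ξ s * g s :=
    mul_sum_filter_lt_le_sum_mul univ (fun s _ => hξ.1 s) (fun s _ => abs_nonneg _) _
  calc ∑ s ∈ univ with ε / 2 < g s, ξ s
      = 2 / ε * (ε / 2 * ∑ s ∈ univ with ε / 2 < g s, ξ s) := by field_simp
    _ ≤ 2 / ε * ((LR + γ * KV * LP) / (1 / D - γ)) := by gcongr; exact hmarkov.trans hmean
    _ = 2 * (LR + γ * KV * LP) / (ε * (1 / D - γ)) := div_mul_div_comm _ _ _ _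

/-- Markov-inequality step: the stationary mass of states whose
environment/latent value gap exceeds `ε/2` is at most
`2·(L_R + γ·K_V·L_P)/(ε·(1/D − γ))`. -/
theorem value_gap_markov_bound
    [Nonempty S] [Nonempty A] [Nonempty SL] [MetricSpace SL] [DecidableEq SL]
    (P : S → A → S → ℝ)
    (hP : ∀ s a, (∀ s', 0 ≤ P s a s') ∧ (∑ s', P s a s') = 1)
    (R : S → A → ℝ) (γ : ℝ) (hγ : 0 ≤ γ ∧ γ < 1)
    (Pbar : SL → A → SL → ℝ)
    (hPbar : ∀ x a, (∀ x', 0 ≤ Pbar x a x') ∧ (∑ x', Pbar x a x') = 1)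
    (Rbar : SL → A → ℝ)
    (φ : S → SL)
    (πbar : SL → A → ℝ) (hπbar : IsPolicy πbar)
    (πb : S → A → ℝ) (hπb : IsPolicy πb)
    (hsupp : ∀ s a, (0 < πb s a ↔ 0 < πbar (φ s) a))
    (hne : ((Finset.univ : Finset (S × A)).filter (fun p => 0 < πb p.1 p.2)).Nonempty)
    (D : ℝ)
    (hD : D = ((Finset.univ : Finset (S × A)).filter (fun p => 0 < πb p.1 p.2)).sup' hne
      (fun p => πbar (φ p.1) p.2 / πb p.1 p.2))
    (hγD : γ * D < 1)
    (ξ : S → ℝ) (hξ : (∀ s, 0 ≤ ξ s) ∧ (∑ s, ξ s) = 1)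
    (hstat : ∀ s', (∑ s, ∑ a, ξ s * πb s a * P s a s') = ξ s')
    (KR KP : ℝ) (hKR0 : 0 ≤ KR) (hKP0 : 0 ≤ KP) (hγKP : γ * KP < 1)
    (hLipR : ∀ x₁ x₂ : SL,
      |(∑ a, πbar x₁ a * Rbar x₁ a) - (∑ a, πbar x₂ a * Rbar x₂ a)| ≤ KR * dist x₁ x₂)
    (hLipP : ∀ x₁ x₂ : SL,
      Wass (fun x' => ∑ a, πbar x₁ a * Pbar x₁ a x')
        (fun x' => ∑ a, πbar x₂ a * Pbar x₂ a x') ≤ KP * dist x₁ x₂)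
    (KV : ℝ) (hKV : KV = KR / (1 - γ * KP))
    (V : S → ℝ)
    (hV : ∀ s, V s = ∑ a, πbar (φ s) a * (R s a + γ * ∑ s', P s a s' * V s'))
    (Vbar : SL → ℝ)
    (hVbar : ∀ x, Vbar x = ∑ a, πbar x a * (Rbar x a + γ * ∑ x', Pbar x a x' * Vbar x'))
    (LR LP : ℝ)
    (hLR : LR = ∑ s, ∑ a, ξ s * πb s a * |R s a - Rbar (φ s) a|)
    (hLP : LP = ∑ s, ∑ a, ξ s * πb s a *
      Wass (fun x => ∑ s', if φ s' = x then P s a s' else 0) (Pbar (φ s) a)) :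
    ∀ ε : ℝ, 0 < ε →
      (∑ s ∈ (Finset.univ : Finset S).filter
        (fun s => ε / 2 < |V s - Vbar (φ s)|), ξ s) ≤
      2 * (LR + γ * KV * LP) / (ε * (1 / D - γ)) :=
  value_gap_markov_bound_general P hP R γ hγ Pbar hPbar Rbar φ πbar hπbar πb hπb hsupp hne D hD hγD
    ξ hξ hstat KR KP hKR0 hγKP hLipR hLipP KV hKV V hV Vbar hVbar LR LP hLR hLP
end
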